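/- Every finite simple graph with the 4-extension property contains both an induced copy of the claw K₁,₃ and an induced copy of the diamond K₄∖e; moreover, there exists a finite simple graph with the 3-extension property containing neither an induced K₁,₃ nor an induced K₄∖e. (Hence the extension indices of K₁,₃ and of K₄∖e both equal 4.) -/

import Mathlib

/-- A graph `G` has the `k`-extension property if for every two disjoint finite sets
`X`, `Y` of vertices with `|X ∪ Y| < k` there is a vertex `z ∉ X ∪ Y` adjacent to
every vertex of `X` and to no vertex of `Y`. -/
def HasExtensionProperty {V : Type} (G : SimpleGraph V) (k : ℕ) : Prop :=
  ∀ X Y : Finset V, Disjoint X Y → X.card + Y.card < k →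
    ∃ z : V, z ∉ X ∧ z ∉ Y ∧ (∀ x ∈ X, G.Adj z x) ∧ (∀ y ∈ Y, ¬ G.Adj z y)

/-- The claw `K₁,₃`: the centre `0` is adjacent to the three pairwise non-adjacent
leaves `1`, `2`, `3`. -/
def clawGraph : SimpleGraph (Fin 4) :=
  SimpleGraph.fromRel (fun a _ => a = 0)

/-- The diamond `K₄ ∖ e`: the complete graph on 4 vertices minus the edge `{2, 3}`. -/
def diamondGraph : SimpleGraph (Fin 4) :=
  SimpleGraph.fromRel (fun a b => ¬((a = 2 ∧ b = 3) ∨ (a = 3 ∧ b = 2)))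

/-!
A graph with the `k`-extension property contains every graph on at most `k` vertices as an
induced subgraph: embed the vertices greedily, each new vertex being required to be adjacent to
a prescribed part of the fewer than `k` vertices already placed.

The 3×3 rook's graph `K₃ □ K₃` has the 3-extension property (a finite check), yet it contains
neither a claw nor a diamond: two non-adjacent neighbours of a vertex lie on different lines
through it, and there are only two such lines; the common neighbours of an edge all lie on the
line of that edge.
-/

open SimpleGraph

def SimpleGraph.Embedding.snoc {V : Type} {G : SimpleGraph V} {n : ℕ}
    {F : SimpleGraph (Fin (n + 1))} (f : F.comap Fin.castSucc ↪g G) {z : V}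
    (hz : z ∉ Set.range f) (hadj : ∀ i, G.Adj z (f i) ↔ F.Adj (Fin.last n) i.castSucc) :
    F ↪g G where
  toEmbedding := Fin.Embedding.snoc f.toEmbedding hz
  map_rel_iff' {a b} := by
    induction a using Fin.lastCases <;> induction b using Fin.lastCases <;>
      simp [Fin.Embedding.snoc_castSucc, Fin.Embedding.snoc_last, hadj, adj_comm]

theorem HasExtensionProperty.nonempty_embedding {V : Type} {G : SimpleGraph V} {k : ℕ}
    (hG : HasExtensionProperty G k) {n : ℕ} (F : SimpleGraph (Fin n)) (hn : n ≤ k) :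
    Nonempty (F ↪g G) := by
  classical
  induction n with
  | zero => exact ⟨RelEmbedding.ofIsEmpty _ _⟩
  | succ n ih =>
    obtain ⟨f⟩ := ih (F.comap Fin.castSucc) (by omega)
    let N : Finset (Fin n) := {i | F.Adj (Fin.last n) i.castSucc}
    obtain ⟨z, hzX, hzY, hX, hY⟩ := hG (N.map f.toEmbedding) (Nᶜ.map f.toEmbedding)
      ((Finset.disjoint_map _).mpr disjoint_compl_right)
      (by rw [Finset.card_map, Finset.card_map, Finset.card_add_card_compl, Fintype.card_fin]
          omega)
    have hz : z ∉ Set.range f := by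
      rintro ⟨i, rfl⟩
      by_cases hi : i ∈ N
      · exact hzX (Finset.mem_map_of_mem _ hi)
      · exact hzY (Finset.mem_map_of_mem _ (Finset.mem_compl.mpr hi))
    refine ⟨f.snoc hz fun i => ⟨fun h => ?_, fun h => hX _ (Finset.mem_map_of_mem _ ?_)⟩⟩
    · by_contra hi
      exact hY _ (Finset.mem_map_of_mem _ (by simpa [N] using hi)) h
    · simpa [N] using h

theorem SimpleGraph.Iso.hasExtensionProperty {V W : Type} {G : SimpleGraph V}
    {H : SimpleGraph W} (e : G ≃g H) {k : ℕ} (hG : HasExtensionProperty G k) :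
    HasExtensionProperty H k := by
  intro X Y hXY hcard
  let e' : W ↪ V := e.symm.toEmbedding.toEmbedding
  obtain ⟨z, hzX, hzY, hX, hY⟩ := hG (X.map e') (Y.map e')
    ((Finset.disjoint_map _).mpr hXY) (by simpa only [Finset.card_map] using hcard)
  refine ⟨e z, fun h => hzX ?_, fun h => hzY ?_, fun x hx => ?_, fun y hy h => ?_⟩
  · exact Finset.mem_map.mpr ⟨e z, h, e.symm_apply_apply z⟩
  · exact Finset.mem_map.mpr ⟨e z, h, e.symm_apply_apply z⟩
  · simpa [e'] using e.map_adj_iff.mpr (hX (e' x) (Finset.mem_map_of_mem e' hx))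
  · exact hY (e' y) (Finset.mem_map_of_mem e' hy) (by simpa [e'] using e.symm.map_adj_iff.mpr h)

theorem Finset.exists_subset_pair_of_card_le_two {α : Type*} [DecidableEq α] [Nonempty α]
    {s : Finset α} (hs : s.card ≤ 2) : ∃ a b, s ⊆ {a, b} := by
  interval_cases h : s.card
  · obtain ⟨a⟩ := ‹Nonempty α›
    exact ⟨a, a, by simp [Finset.card_eq_zero.mp h]⟩
  · obtain ⟨a, rfl⟩ := Finset.card_eq_one.mp h
    exact ⟨a, a, by simp⟩
  · obtain ⟨a, b, -, rfl⟩ := Finset.card_eq_two.mp h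
    exact ⟨a, b, subset_rfl⟩

theorem hasExtensionProperty_three_of_forall_pair {V : Type} [Nonempty V] {G : SimpleGraph V}
    (h : ∀ a b : V, ∀ i j : Bool, (a = b → i = j) →
      ∃ z, z ≠ a ∧ z ≠ b ∧ (G.Adj z a ↔ i) ∧ (G.Adj z b ↔ j)) :
    HasExtensionProperty G 3 := by
  classical
  intro X Y hXY hcard
  obtain ⟨a, b, hab⟩ := Finset.exists_subset_pair_of_card_le_two
    (s := X ∪ Y) (by rw [Finset.card_union_of_disjoint hXY]; omega)
  obtain ⟨z, hza, hzb, hzaX, hzbX⟩ := h a b (a ∈ X) (b ∈ X) (by rintro rfl; rfl)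
  have hz : ∀ v ∈ X ∪ Y, z ≠ v ∧ (G.Adj z v ↔ v ∈ X) := fun v hv => by
    rcases Finset.mem_insert.mp (hab hv) with rfl | hv
    · simpa [hza] using hzaX
    · rw [Finset.mem_singleton.mp hv]; simpa [hzb] using hzbX
  refine ⟨z, fun hzX => ?_, fun hzY => ?_, fun x hx => ?_, fun y hy hzy => ?_⟩
  · exact (hz z (Finset.mem_union_left _ hzX)).1 rfl
  · exact (hz z (Finset.mem_union_right _ hzY)).1 rfl
  · exact (hz x (Finset.mem_union_left _ hx)).2.mpr hx
  · exact Finset.disjoint_left.mp hXY ((hz y (Finset.mem_union_right _ hy)).2.mp hzy) hy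

def rookGraph (α β : Type*) : SimpleGraph (α × β) := (⊤ : SimpleGraph α) □ (⊤ : SimpleGraph β)

section rookGraph

variable {α β : Type*}

theorem rookGraph_adj {u v : α × β} :
    (rookGraph α β).Adj u v ↔ u.1 ≠ v.1 ∧ u.2 = v.2 ∨ u.2 ≠ v.2 ∧ u.1 = v.1 := by
  simp [rookGraph, boxProd_adj]

instance [DecidableEq α] [DecidableEq β] : DecidableRel (rookGraph α β).Adj :=
  fun _ _ => decidable_of_iff' _ rookGraph_adj

theorem rookGraph_fst_eq_iff_of_not_adj {c u v : α × β} (hu : (rookGraph α β).Adj c u)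
    (hv : (rookGraph α β).Adj c v) (huv : u ≠ v) (h : ¬(rookGraph α β).Adj u v) :
    u.1 = c.1 ↔ v.1 ≠ c.1 := by
  rw [rookGraph_adj] at hu hv h
  rw [Ne, Prod.ext_iff] at huv
  grind

theorem isClique_rookGraph_commonNeighbors {a b : α × β} (h : (rookGraph α β).Adj a b) :
    (rookGraph α β).IsClique ((rookGraph α β).commonNeighbors a b) := by
  intro c hc d hd hcd
  rw [mem_commonNeighbors, rookGraph_adj, rookGraph_adj] at hc hd
  rw [rookGraph_adj] at h ⊢
  rw [Ne, Prod.ext_iff] at hcd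
  grind

theorem isEmpty_clawGraph_embedding_rookGraph : IsEmpty (clawGraph ↪g rookGraph α β) := by
  refine ⟨fun f => ?_⟩
  have hleaf {i : Fin 4} (hi : i ≠ 0) : (rookGraph α β).Adj (f 0) (f i) :=
    f.map_adj_iff.mpr (by simp [clawGraph, hi.symm])
  have hsplit {i j : Fin 4} (hi : i ≠ 0) (hj : j ≠ 0) (hij : i ≠ j) :=
    rookGraph_fst_eq_iff_of_not_adj (hleaf hi) (hleaf hj) (f.injective.ne hij)
      (mt f.map_adj_iff.mp (by simp [clawGraph, hi, hj, hij]))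
  have h12 := hsplit (i := 1) (j := 2) (by decide) (by decide) (by decide)
  have h13 := hsplit (i := 1) (j := 3) (by decide) (by decide) (by decide)
  have h23 := hsplit (i := 2) (j := 3) (by decide) (by decide) (by decide)
  tauto

theorem isEmpty_diamondGraph_embedding_rookGraph : IsEmpty (diamondGraph ↪g rookGraph α β) := by
  refine ⟨fun f => ?_⟩
  have hcommon {i : Fin 4} (hi : i ≠ 0 ∧ i ≠ 1) :
      f i ∈ (rookGraph α β).commonNeighbors (f 0) (f 1) := by
    rw [mem_commonNeighbors, f.map_adj_iff, f.map_adj_iff]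
    simp [diamondGraph, hi.1.symm, hi.2.symm]
  have h23 := isClique_rookGraph_commonNeighbors (f.map_adj_iff.mpr (by simp [diamondGraph]))
    (hcommon (i := 2) (by decide)) (hcommon (i := 3) (by decide)) (f.injective.ne (by decide))
  exact (by simp [diamondGraph] : ¬diamondGraph.Adj 2 3) (f.map_adj_iff.mp h23)

end rookGraph

theorem hasExtensionProperty_rookGraph_fin_three :
    HasExtensionProperty (rookGraph (Fin 3) (Fin 3)) 3 :=
  hasExtensionProperty_three_of_forall_pair (by decide)

/-- The extension indices of the claw and of the diamond both equal 4. -/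
theorem extension_index_claw_and_diamond_eq_four :
    (∀ (V : Type) [Fintype V] (G : SimpleGraph V),
      HasExtensionProperty G 4 →
        Nonempty (clawGraph ↪g G) ∧ Nonempty (diamondGraph ↪g G)) ∧
    ∃ (n : ℕ) (H : SimpleGraph (Fin n)),
      HasExtensionProperty H 3 ∧
      IsEmpty (clawGraph ↪g H) ∧ IsEmpty (diamondGraph ↪g H) := by
  refine ⟨fun V _ G hG => ⟨hG.nonempty_embedding _ le_rfl, hG.nonempty_embedding _ le_rfl⟩, ?_⟩
  let e := Iso.map finProdFinEquiv (rookGraph (Fin 3) (Fin 3))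
  refine ⟨3 * 3, _, e.hasExtensionProperty hasExtensionProperty_rookGraph_fin_three,
    ⟨fun f => ?_⟩, ⟨fun f => ?_⟩⟩
  · exact isEmpty_clawGraph_embedding_rookGraph.false (e.symm.toEmbedding.comp f)
  · exact isEmpty_diamondGraph_embedding_rookGraph.false (e.symm.toEmbedding.comp f)
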